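/- arXiv:2309.06699 — 2 statements merged into one kernel-verified Lean document; each statement's English description precedes it below -/
import Mathlib

section
/- Let C be a convex subset of a topological real vector space, x ∈ fri C and y ∈ C. Then the half-open segment [x,y) is contained in fri C. -/
open Pointwise

/-- A face of a convex set `C`: a convex subset `F ⊆ C` such that whenever a point of `F`
lies in the open segment between two points of `C`, both endpoints belong to `F`. -/
def IsFace {X : Type*} [AddCommGroup X] [Module ℝ X] (C F : Set X) : Prop :=
  F ⊆ C ∧ Convex ℝ F ∧
    ∀ x ∈ F, ∀ y ∈ C, ∀ z ∈ C, x ∈ openSegment ℝ y z → y ∈ F ∧ z ∈ F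

/-- The minimal face of `C` containing `x`: the intersection of all faces containing `x`. -/
def minFace {X : Type*} [AddCommGroup X] [Module ℝ X] (C : Set X) (x : X) : Set X :=
  ⋂₀ {F | IsFace C F ∧ x ∈ F}

/-- The conic hull of a set. -/
def coneHull {X : Type*} [AddCommGroup X] [Module ℝ X] (S : Set X) : Set X :=
  {w | ∃ (a : ℝ) (s : X), 0 ≤ a ∧ s ∈ S ∧ w = a • s}

/-- The intrinsic core of a convex set. -/
def icr {X : Type*} [AddCommGroup X] [Module ℝ X] (C : Set X) : Set X :=
  {x ∈ C | ∀ y ∈ C, ∃ z ∈ C, x ∈ openSegment ℝ y z}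

/-- The face relative interior of a convex set in a topological vector space. -/
def fri {X : Type*} [AddCommGroup X] [Module ℝ X] [TopologicalSpace X] (C : Set X) : Set X :=
  {x ∈ C | C ⊆ closure (minFace C x)}

section

variable {X : Type*} [AddCommGroup X] [Module ℝ X] {C : Set X} {x y z : X}

theorem IsFace.left_mem_of_mem_openSegment {F : Set X} (hF : IsFace C F) (hz : z ∈ F)
    (hx : x ∈ C) (hy : y ∈ C) (hzxy : z ∈ openSegment ℝ x y) : x ∈ F :=
  (hF.2.2 z hz x hx y hy hzxy).1

theorem minFace_subset_minFace_of_mem_openSegment (hx : x ∈ C) (hy : y ∈ C)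
    (hz : z ∈ openSegment ℝ x y) : minFace C x ⊆ minFace C z :=
  fun _ hw F ⟨hF, hzF⟩ => hw F ⟨hF, hF.left_mem_of_mem_openSegment hzF hx hy hz⟩

theorem mem_fri_of_mem_openSegment [TopologicalSpace X] (hC : Convex ℝ C) (hx : x ∈ fri C)
    (hy : y ∈ C) (hz : z ∈ openSegment ℝ x y) : z ∈ fri C :=
  ⟨hC.openSegment_subset hx.1 hy hz,
    hx.2.trans (closure_mono (minFace_subset_minFace_of_mem_openSegment hx.1 hy hz))⟩

end

theorem segment_subset_fri_general {X : Type*} [AddCommGroup X] [Module ℝ X] [TopologicalSpace X]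
    (C : Set X) (hC : Convex ℝ C) (x y : X) (hx : x ∈ fri C) (hy : y ∈ C) :
    ∀ t ∈ Set.Ico (0 : ℝ) 1, (1 - t) • x + t • y ∈ fri C := by
  rintro t ⟨ht0, ht1⟩
  rcases ht0.eq_or_lt with rfl | ht0
  · simpa using hx
  exact mem_fri_of_mem_openSegment hC hx hy ⟨1 - t, t, by linarith, ht0, by ring, rfl⟩

/-- if `x ∈ fri C` and `y ∈ C`, then `[x, y) ⊆ fri C`. -/
theorem segment_subset_fri {X : Type*} [AddCommGroup X] [Module ℝ X] [TopologicalSpace X]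
    [IsTopologicalAddGroup X] [ContinuousSMul ℝ X]
    (C : Set X) (hC : Convex ℝ C) (x y : X) (hx : x ∈ fri C) (hy : y ∈ C) :
    ∀ t ∈ Set.Ico (0 : ℝ) 1, (1 - t) • x + t • y ∈ fri C :=
  segment_subset_fri_general C hC x y hx hy
end

section
/- Let X, Y be topological real vector spaces and C ⊆ X, D ⊆ Y convex sets. Then fri(C × D) = (fri C) × (fri D). -/
open Pointwise

/- A face `H` of `C × D` through `p` is cut by the horizontal line through `p` in a face of `C`
and by the vertical one in a face of `D`, so `minFace C p.1 × {p.2}` and `{p.1} × minFace D p.2`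
lie in `H`. For `q` in `minFace C p.1 × minFace D p.2`, the points `(q.1, p.2)` and `(p.1, q.2)`
of `H` have the same midpoint as `q` and `p`, so the face property puts `q` in `H`. Hence
`minFace (C × D) p = minFace C p.1 × minFace D p.2`, and the product rule for `fri` follows
from `closure (A × B) = closure A × closure B`. -/

open Set

section Faces

variable {X Y Z : Type*} [AddCommGroup X] [Module ℝ X] [AddCommGroup Y] [Module ℝ Y]
  [AddCommGroup Z] [Module ℝ Z]

theorem Convex.isFace_self {C : Set X} (hC : Convex ℝ C) : IsFace C C :=
  ⟨subset_rfl, hC, fun _ _ _ hy _ hz _ => ⟨hy, hz⟩⟩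

theorem minFace_subset_of_isFace {C F : Set X} {x : X} (hF : IsFace C F) (hx : x ∈ F) :
    minFace C x ⊆ F :=
  sInter_subset_of_mem ⟨hF, hx⟩

theorem IsFace.prod {C F : Set X} {D G : Set Y} (hF : IsFace C F) (hG : IsFace D G) :
    IsFace (C ×ˢ D) (F ×ˢ G) := by
  refine ⟨prod_mono hF.1 hG.1, hF.2.1.prod hG.2.1, ?_⟩
  rintro x hx y hy z hz ⟨a, b, ha, hb, hab, hsum⟩
  have h₁ := hF.2.2 x.1 hx.1 y.1 hy.1 z.1 hz.1 ⟨a, b, ha, hb, hab, congrArg Prod.fst hsum⟩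
  have h₂ := hG.2.2 x.2 hx.2 y.2 hy.2 z.2 hz.2 ⟨a, b, ha, hb, hab, congrArg Prod.snd hsum⟩
  exact ⟨⟨h₁.1, h₂.1⟩, ⟨h₁.2, h₂.2⟩⟩

theorem IsFace.inter_affine_preimage {C : Set X} {E H : Set Z} (hC : Convex ℝ C)
    (hH : IsFace E H) (f : X →ᵃ[ℝ] Z) (hf : MapsTo f C E) : IsFace C (C ∩ f ⁻¹' H) := by
  refine ⟨inter_subset_left, hC.inter (hH.2.1.affine_preimage f), ?_⟩
  rintro x ⟨hxC, hxH⟩ y hy z hz hxyz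
  have hfx : f x ∈ openSegment ℝ (f y) (f z) := by
    rw [← image_openSegment]
    exact mem_image_of_mem f hxyz
  obtain ⟨hfy, hfz⟩ := hH.2.2 (f x) hxH (f y) (hf hy) (f z) (hf hz) hfx
  exact ⟨⟨hy, hfy⟩, ⟨hz, hfz⟩⟩

theorem IsFace.mk_mem_of_crossed_mem {C : Set X} {D : Set Y} {H : Set (X × Y)}
    (hH : IsFace (C ×ˢ D) H) {x x' : X} {y y' : Y} (hx : x ∈ C) (hx' : x' ∈ C) (hy : y ∈ D)
    (hy' : y' ∈ D) (h₁ : (x, y') ∈ H) (h₂ : (x', y) ∈ H) : (x, y) ∈ H := by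
  have hmid : (2⁻¹ : ℝ) • (x, y') + (2⁻¹ : ℝ) • (x', y) ∈ H :=
    hH.2.1 h₁ h₂ (by norm_num) (by norm_num) (by norm_num)
  have hseg : (2⁻¹ : ℝ) • (x, y') + (2⁻¹ : ℝ) • (x', y) ∈ openSegment ℝ (x, y) (x', y') :=
    ⟨2⁻¹, 2⁻¹, by norm_num, by norm_num, by norm_num, Prod.ext rfl (add_comm _ _)⟩
  exact (hH.2.2 _ hmid (x, y) ⟨hx, hy⟩ (x', y') ⟨hx', hy'⟩ hseg).1

theorem minFace_prod {C : Set X} {D : Set Y} (hC : Convex ℝ C) (hD : Convex ℝ D) {p : X × Y}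
    (hp : p ∈ C ×ˢ D) : minFace (C ×ˢ D) p = minFace C p.1 ×ˢ minFace D p.2 := by
  refine Subset.antisymm (fun q hq => ⟨fun F hF => ?_, fun G hG => ?_⟩) ?_
  · exact (hq (F ×ˢ D) ⟨hF.1.prod hD.isFace_self, hF.2, hp.2⟩).1
  · exact (hq (C ×ˢ G) ⟨hC.isFace_self.prod hG.1, hp.1, hG.2⟩).2
  rintro q ⟨hq₁, hq₂⟩ H ⟨hH, hpH⟩
  have hhor := hH.inter_affine_preimage hC ((AffineMap.id ℝ X).prod (AffineMap.const ℝ X p.2))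
    fun x hx => ⟨hx, hp.2⟩
  have hver := hH.inter_affine_preimage hD ((AffineMap.const ℝ Y p.1).prod (AffineMap.id ℝ Y))
    fun y hy => ⟨hp.1, hy⟩
  obtain ⟨hq₁C, hq₁H⟩ := minFace_subset_of_isFace hhor ⟨hp.1, hpH⟩ hq₁
  obtain ⟨hq₂D, hq₂H⟩ := minFace_subset_of_isFace hver ⟨hp.2, hpH⟩ hq₂
  exact hH.mk_mem_of_crossed_mem hq₁C hp.1 hq₂D hp.2 hq₁H hq₂H

end Faces

theorem fri_prod_general {X Y : Type*} [AddCommGroup X] [Module ℝ X] [TopologicalSpace X]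
    [AddCommGroup Y] [Module ℝ Y] [TopologicalSpace Y]
    (C : Set X) (D : Set Y) (hC : Convex ℝ C) (hD : Convex ℝ D) :
    fri (C ×ˢ D) = (fri C) ×ˢ (fri D) := by
  ext p
  by_cases hp : p ∈ C ×ˢ D
  · have hfri :
        p ∈ fri (C ×ˢ D) ↔ C ⊆ closure (minFace C p.1) ∧ D ⊆ closure (minFace D p.2) := by
      rw [fri, mem_sep_iff, minFace_prod hC hD hp, closure_prod_eq,
        prod_subset_prod_iff' ⟨p, hp⟩, and_iff_right hp]
    rw [hfri, mem_prod, fri, fri, mem_sep_iff, mem_sep_iff, and_iff_right hp.1, and_iff_right hp.2]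
  · exact iff_of_false (fun h => hp h.1) fun h => hp ⟨h.1.1, h.2.1⟩

/-- product rule for the face relative interior. -/
theorem fri_prod {X Y : Type*} [AddCommGroup X] [Module ℝ X] [TopologicalSpace X]
    [IsTopologicalAddGroup X] [ContinuousSMul ℝ X]
    [AddCommGroup Y] [Module ℝ Y] [TopologicalSpace Y]
    [IsTopologicalAddGroup Y] [ContinuousSMul ℝ Y]
    (C : Set X) (D : Set Y) (hC : Convex ℝ C) (hD : Convex ℝ D) :
    fri (C ×ˢ D) = (fri C) ×ˢ (fri D) :=
  fri_prod_general C D hC hD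
end
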